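/- arXiv:2503.10449 — 2 statements merged into one kernel-verified Lean document; each statement's English description precedes it below -/
import Mathlib

section
/- Let f : Ω_C → (0,∞) be bounded away from 0. Then the pseudo-conjugate f* equals the radial function of the copolar of the convexification of f: f* = ρ_{⟨f⟩*} on Ω_{C°}. -/
open Set Metric Pointwise

noncomputable section

abbrev E (n : ℕ) := EuclideanSpace ℝ (Fin n)

/-- A closed convex pointed cone with nonempty interior. -/
def IsGoodCone {n : ℕ} (C : Set (E n)) : Prop :=
  IsClosed C ∧ Convex ℝ C ∧ (∀ x ∈ C, ∀ r : ℝ, 0 ≤ r → r • x ∈ C) ∧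
    (∀ x ∈ C, -x ∈ C → x = 0) ∧ (interior C).Nonempty

/-- A `C`-pseudo-cone. -/
def IsPseudoCone {n : ℕ} (C K : Set (E n)) : Prop :=
  K.Nonempty ∧ IsClosed K ∧ Convex ℝ K ∧ K ⊆ C ∧ (0 : E n) ∉ K ∧ K + C = K

/-- The dual cone of `C`. -/
def dualCone {n : ℕ} (C : Set (E n)) : Set (E n) := {x | ∀ y ∈ C, (inner ℝ x y : ℝ) ≤ 0}

/-- Ω_C = S^{n-1} ∩ int C. -/
def Omega {n : ℕ} (C : Set (E n)) : Set (E n) := {v | ‖v‖ = 1} ∩ interior C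

/-- Radial function. -/
def radial {n : ℕ} (K : Set (E n)) (v : E n) : ℝ := sInf {r : ℝ | 0 < r ∧ r • v ∈ K}

/-- Support function. -/
def suppFn {n : ℕ} (K : Set (E n)) (u : E n) : ℝ := sSup ((fun y => (inner ℝ u y : ℝ)) '' K)

/-- Copolar set. -/
def copolar {n : ℕ} (K : Set (E n)) : Set (E n) := {x | ∀ y ∈ K, (inner ℝ x y : ℝ) ≤ -1}

/-- Convexification of `f`. -/
def convexif {n : ℕ} (C : Set (E n)) (f : E n → ℝ) : Set (E n) :=
  ⋂₀ {K | IsPseudoCone C K ∧ ∀ v ∈ Omega C, f v • v ∈ K}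

/-- Pseudo-conjugate of a function on a domain `D` of directions. -/
def pconj {n : ℕ} (D : Set (E n)) (f : E n → ℝ) (u : E n) : ℝ :=
  sSup ((fun v => 1 / (|(inner ℝ u v : ℝ)| * f v)) '' D)

/-- `u` is an outer normal vector of `K` at `x`. -/
def IsNormalAt {n : ℕ} (K : Set (E n)) (u x : E n) : Prop :=
  x ∈ K ∧ ∀ y ∈ K, (inner ℝ u (y - x) : ℝ) ≤ 0

/-! For nonzero `u ∈ C°`, `⟪u, v⟫ < 0` on `int C`. Since every half-space
`{x ∈ C | ⟪w, x⟫ ≤ -1}` with `w ∈ C°` is a `C`-pseudo-cone, `w ∈ ⟨f⟩*` holds iff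
`⟪w, f(v) v⟫ ≤ -1` for all `v ∈ Ω_C`. For `w = r u` this says that `r` bounds
`1 / (|⟪u, v⟫| f(v))` from above, so the radial set of `⟨f⟩*` in direction `u` is the set of
upper bounds of the set whose supremum is `f*(u)`. -/

open Filter Topology

-- For empty or unbounded `s` both sides are the junk value `0`.
theorem Real.sInf_upperBounds_eq_sSup (s : Set ℝ) : sInf (upperBounds s) = sSup s := by
  rcases s.eq_empty_or_nonempty with rfl | hne
  · rw [upperBounds_empty, Real.sSup_empty, Real.sInf_of_not_bddBelow not_bddBelow_univ]
  by_cases hbdd : BddAbove s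
  · exact csInf_upperBounds_eq_csSup hbdd hne
  · rw [Real.sSup_of_not_bddAbove hbdd, not_nonempty_iff_eq_empty.1 hbdd, Real.sInf_empty]

theorem Convex.add_mem_of_smul_mem {V : Type*} [AddCommGroup V] [Module ℝ V] {C : Set V}
    (hconv : Convex ℝ C) (hsmul : ∀ x ∈ C, ∀ r : ℝ, 0 ≤ r → r • x ∈ C) {x y : V}
    (hx : x ∈ C) (hy : y ∈ C) : x + y ∈ C := by
  have hmid := hconv hx hy (by norm_num : (0 : ℝ) ≤ 1 / 2) (by norm_num : (0 : ℝ) ≤ 1 / 2)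
    (by norm_num)
  convert hsmul _ hmid 2 zero_le_two using 1
  rw [smul_add, smul_smul, smul_smul]
  norm_num

theorem inner_smul_smul_le_neg_one_iff {F : Type*} [NormedAddCommGroup F] [InnerProductSpace ℝ F]
    {u v : F} {r t : ℝ} (huv : inner ℝ u v < 0) (ht : 0 < t) :
    inner ℝ (r • u) (t • v) ≤ -1 ↔ 1 / (|inner ℝ u v| * t) ≤ r := by
  rw [real_inner_smul_left, real_inner_smul_right, abs_of_neg huv,
    div_le_iff₀ (mul_pos (neg_pos.2 huv) ht)]
  constructor <;> intro h <;> linarith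

variable {n : ℕ} {C : Set (E n)}

theorem smul_mem_dualCone {u : E n} (hu : u ∈ dualCone C) {r : ℝ} (hr : 0 ≤ r) :
    r • u ∈ dualCone C := fun y hy => by
  rw [real_inner_smul_left]
  exact mul_nonpos_of_nonneg_of_nonpos hr (hu y hy)

theorem inner_neg_of_mem_dualCone_of_mem_interior {u x : E n} (hu : u ∈ dualCone C)
    (hu0 : u ≠ 0) (hx : x ∈ interior C) : inner ℝ u x < 0 := by
  have hpath : Tendsto (fun t : ℝ => x + t • u) (𝓝[>] 0) (𝓝 x) := by
    have : Continuous fun t : ℝ => x + t • u := by fun_prop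
    simpa using (this.tendsto 0).mono_left nhdsWithin_le_nhds
  obtain ⟨t, htC, ht⟩ :=
    ((hpath.eventually (mem_interior_iff_mem_nhds.1 hx)).and self_mem_nhdsWithin).exists
  have h := hu _ htC
  rw [real_inner_comm, inner_add_left, real_inner_smul_left, real_inner_self_eq_norm_sq] at h
  have : 0 < t * ‖u‖ ^ 2 := mul_pos ht (by positivity)
  rw [real_inner_comm]
  linarith

namespace IsGoodCone

theorem smul_mem_interior (hC : IsGoodCone C) {x : E n} (hx : x ∈ interior C) {r : ℝ}
    (hr : 0 < r) : r • x ∈ interior C := by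
  have hsub : r • C ⊆ C := by
    rintro _ ⟨y, hy, rfl⟩
    exact hC.2.2.1 y hy r hr.le
  exact interior_mono hsub (by rw [interior_smul₀ hr.ne']; exact smul_mem_smul_set hx)

theorem omega_nonempty (hC : IsGoodCone C) (h0 : (0 : E n) ∉ interior C) :
    (Omega C).Nonempty := by
  obtain ⟨x, hx⟩ := hC.2.2.2.2
  have hx0 : x ≠ 0 := fun h => h0 (h ▸ hx)
  exact ⟨‖x‖⁻¹ • x, norm_smul_inv_norm hx0,
    hC.smul_mem_interior hx (inv_pos.2 (norm_pos_iff.2 hx0))⟩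

theorem isPseudoCone_inter_halfSpace (hC : IsGoodCone C) {w : E n} (hw : w ∈ dualCone C)
    (hne : (C ∩ {x | inner ℝ w x ≤ -1}).Nonempty) :
    IsPseudoCone C (C ∩ {x | inner ℝ w x ≤ -1}) := by
  obtain ⟨hcl, hconv, hsmul, -, -⟩ := hC
  refine ⟨hne, hcl.inter (isClosed_le (by fun_prop) continuous_const),
    hconv.inter (convex_halfSpace_le (innerₛₗ ℝ w).isLinear _), inter_subset_left,
    fun h => by norm_num at h, ?_⟩
  obtain ⟨x₀, hx₀, -⟩ := hne
  refine (Set.subset_add_left _ (by simpa using hsmul x₀ hx₀ 0 le_rfl)).antisymm' ?_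
  rintro _ ⟨y, ⟨hyC, hyw : inner ℝ w y ≤ -1⟩, z, hz, rfl⟩
  refine ⟨hconv.add_mem_of_smul_mem hsmul hyC hz, ?_⟩
  change inner ℝ w (y + z) ≤ -1
  rw [inner_add_right]
  linarith [hw z hz]

end IsGoodCone

theorem smul_mem_convexif {f : E n → ℝ} {v : E n} (hv : v ∈ Omega C) :
    f v • v ∈ convexif C f :=
  fun _ hK => hK.2 v hv

theorem convexif_subset {f : E n → ℝ} {K : Set (E n)} (hK : IsPseudoCone C K)
    (hfK : ∀ v ∈ Omega C, f v • v ∈ K) : convexif C f ⊆ K :=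
  sInter_subset_of_mem ⟨hK, hfK⟩

theorem mem_copolar_convexif_iff (hC : IsGoodCone C) {f : E n → ℝ} {w : E n}
    (hw : w ∈ dualCone C) (hΩ : (Omega C).Nonempty) (hf : ∀ v ∈ Omega C, 0 ≤ f v) :
    w ∈ copolar (convexif C f) ↔ ∀ v ∈ Omega C, inner ℝ w (f v • v) ≤ -1 := by
  refine ⟨fun h v hv => h _ (smul_mem_convexif hv), fun h y hy => ?_⟩
  have hfC : ∀ v ∈ Omega C, f v • v ∈ C ∩ {x | inner ℝ w x ≤ -1} := fun v hv =>
    ⟨hC.2.2.1 v (interior_subset hv.2) _ (hf v hv), h v hv⟩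
  obtain ⟨v₀, hv₀⟩ := hΩ
  exact (convexif_subset (hC.isPseudoCone_inter_halfSpace hw ⟨_, hfC v₀ hv₀⟩) hfC hy).2

theorem stmt12 {n : ℕ} (C : Set (E n)) (hC : IsGoodCone C) (f : E n → ℝ)
    (a : ℝ) (ha : 0 < a) (hf : ∀ v ∈ Omega C, a ≤ f v) :
    ∀ u ∈ Omega (dualCone C), pconj (Omega C) f u = radial (copolar (convexif C f)) u := by
  intro u hu
  have hu0 : u ≠ 0 := ne_zero_of_norm_ne_zero (by rw [hu.1]; exact one_ne_zero)
  have huC : u ∈ dualCone C := interior_subset hu.2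
  have hneg : ∀ v ∈ interior C, inner ℝ u v < 0 := fun v hv =>
    inner_neg_of_mem_dualCone_of_mem_interior huC hu0 hv
  have hfpos : ∀ v ∈ Omega C, 0 < f v := fun v hv => ha.trans_le (hf v hv)
  obtain ⟨v₀, hv₀⟩ := hC.omega_nonempty fun h0 => by simpa using hneg 0 h0
  have hR : {r : ℝ | 0 < r ∧ r • u ∈ copolar (convexif C f)} =
      upperBounds ((fun v => 1 / (|inner ℝ u v| * f v)) '' Omega C) := by
    ext r
    simp only [mem_upperBounds, forall_mem_image]
    constructor
    · rintro ⟨-, hru⟩ v hv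
      exact (inner_smul_smul_le_neg_one_iff (hneg v hv.2) (hfpos v hv)).1
        (hru _ (smul_mem_convexif hv))
    · intro hr
      have hr0 : 0 < r := (one_div_pos.2 (mul_pos (abs_pos.2 (hneg v₀ hv₀.2).ne)
        (hfpos v₀ hv₀))).trans_le (hr hv₀)
      refine ⟨hr0, (mem_copolar_convexif_iff hC (smul_mem_dualCone huC hr0.le) ⟨v₀, hv₀⟩
        fun v hv => (hfpos v hv).le).2 fun v hv => ?_⟩
      exact (inner_smul_smul_le_neg_one_iff (hneg v hv.2) (hfpos v hv)).2 (hr hv)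
  rw [pconj, radial, hR, Real.sInf_upperBounds_eq_sSup]
end
end

section
/- For every C-pseudo-cone K, the pseudo-conjugate of its radial function equals the radial function of its copolar: (ρ_K)* = ρ_{K*} on Ω_{C°}. -/
open Set Metric Pointwise Filter Topology

noncomputable section

/-
For `u ∈ Ω_{C°}` the form `⟪u, ·⟫` is at most `-ε‖·‖` on `C`, hence at most a negative constant
on `K`, so `y ↦ 1 / |⟪u, y⟫|` is bounded and continuous on `K`. Both sides equal its supremum over
`K`. For the copolar this is a rewriting of the definition: `r • u ∈ K*` says exactly that `r`
bounds `1 / |⟪u, y⟫|` on `K`. For the pseudo-conjugate, `1 / (|⟪u, v⟫| ρ_K(v))` is the value at the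
boundary point `ρ_K(v) v ∈ K`; conversely every `y ∈ K ∩ int C` is a multiple `t v` with
`t ≥ ρ_K(v)`, which only lowers the value, and `K ∩ int C` is dense in `K` since `y + εc → y`
for `c ∈ int C`.
-/

namespace ConvexCone

variable {F : Type*} [AddCommGroup F] [Module ℝ F] [TopologicalSpace F] (C : ConvexCone ℝ F)

theorem smul_mem_interior [ContinuousConstSMul ℝ F] {r : ℝ} (hr : 0 < r) {x : F}
    (hx : x ∈ interior (C : Set F)) : r • x ∈ interior (C : Set F) := by
  have hsub : r • (C : Set F) ⊆ C := by
    rintro _ ⟨y, hy, rfl⟩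
    exact C.smul_mem hr hy
  apply interior_mono hsub
  rw [interior_smul₀ hr.ne']
  exact smul_mem_smul_set hx

theorem add_mem_interior [IsTopologicalAddGroup F] {x y : F} (hx : x ∈ (C : Set F))
    (hy : y ∈ interior (C : Set F)) : x + y ∈ interior (C : Set F) := by
  have hsub : x +ᵥ interior (C : Set F) ⊆ interior C := by
    refine interior_maximal ?_ (isOpen_interior.vadd x)
    rintro _ ⟨z, hz, rfl⟩
    exact C.add_mem hx (interior_subset hz)
  exact hsub (vadd_mem_vadd_set hy)

variable [IsTopologicalAddGroup F] [ContinuousSMul ℝ F]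

theorem exists_pos_smul_mem_of_add_eq {K : Set F} (hKne : K.Nonempty)
    (hKC : K + (C : Set F) = K) {v : F} (hv : v ∈ interior (C : Set F)) :
    ∃ r > (0 : ℝ), r • v ∈ K := by
  obtain ⟨y, hy⟩ := hKne
  have hlim : Tendsto (fun t : ℝ => v - t • y) (𝓝[>] 0) (𝓝 v) := by
    have : Continuous (fun t : ℝ => v - t • y) := by fun_prop
    simpa using (this.tendsto 0).mono_left nhdsWithin_le_nhds
  obtain ⟨t, htC, ht⟩ :=
    ((hlim.eventually (mem_interior_iff_mem_nhds.1 hv)).and self_mem_nhdsWithin).exists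
  -- `t⁻¹ • v = y + t⁻¹ • (v - t • y)`, a point of `K + C`.
  refine ⟨t⁻¹, inv_pos.2 ht, hKC ▸ ?_⟩
  convert Set.add_mem_add hy (C.smul_mem (inv_pos.2 ht) htC) using 1
  rw [smul_sub, smul_smul, inv_mul_cancel₀ (ne_of_gt ht), one_smul, add_sub_cancel]

theorem subset_closure_inter_interior {K : Set F} (hCint : (interior (C : Set F)).Nonempty)
    (hKsub : K ⊆ C) (hKC : K + (C : Set F) = K) :
    K ⊆ closure (K ∩ interior (C : Set F)) := by
  obtain ⟨c, hc⟩ := hCint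
  intro y hy
  have hlim : Tendsto (fun t : ℝ => y + t • c) (𝓝[>] 0) (𝓝 y) := by
    have : Continuous (fun t : ℝ => y + t • c) := by fun_prop
    simpa using (this.tendsto 0).mono_left nhdsWithin_le_nhds
  refine mem_closure_of_tendsto hlim (eventually_nhdsWithin_of_forall fun t ht => ⟨?_, ?_⟩)
  · exact hKC ▸ Set.add_mem_add hy (C.smul_mem ht (interior_subset hc))
  · exact C.add_mem_interior (hKsub hy) (C.smul_mem_interior ht hc)

end ConvexCone

theorem exists_pos_le_norm_of_isClosed {F : Type*} [SeminormedAddCommGroup F] {K : Set F}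
    (hK : IsClosed K) (h0 : (0 : F) ∉ K) : ∃ d > 0, ∀ y ∈ K, d ≤ ‖y‖ := by
  obtain ⟨d, hd, hball⟩ := Metric.mem_nhds_iff.1 (hK.isOpen_compl.mem_nhds h0)
  refine ⟨d, hd, fun y hy => not_lt.1 fun hlt => hball ?_ hy⟩
  rwa [mem_ball_zero_iff]

section

variable {n : ℕ}

def IsGoodCone.toConvexCone {C : Set (E n)} (hC : IsGoodCone C) : ConvexCone ℝ (E n) where
  carrier := C
  smul_mem' _ hr _ hx := hC.2.2.1 _ hx _ hr.le
  add_mem' x hx y hy := by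
    have hmid : (2⁻¹ : ℝ) • x + (2⁻¹ : ℝ) • y ∈ C :=
      hC.2.1 hx hy (by norm_num) (by norm_num) (by norm_num)
    have := hC.2.2.1 _ hmid 2 (by norm_num)
    rwa [smul_add, smul_smul, smul_smul, mul_inv_cancel₀ two_ne_zero, one_smul, one_smul] at this

theorem exists_inner_le_neg_mul_norm {C : Set (E n)} {u : E n} (hu : u ∈ interior (dualCone C)) :
    ∃ ε > 0, ∀ y ∈ C, inner ℝ u y ≤ -(ε * ‖y‖) := by
  obtain ⟨ε, hε, hball⟩ := nhds_basis_closedBall.mem_iff.1 (mem_interior_iff_mem_nhds.1 hu)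
  refine ⟨ε, hε, fun y hy => ?_⟩
  rcases eq_or_ne y 0 with rfl | hy0
  · simp
  have hnorm : 0 < ‖y‖ := norm_pos_iff.2 hy0
  -- Test the dual-cone inequality at the point of the closed ball pushed towards `y`.
  have hmem : u + (ε / ‖y‖) • y ∈ closedBall u ε := by
    rw [mem_closedBall, dist_eq_norm, add_sub_cancel_left, norm_smul, Real.norm_eq_abs,
      abs_of_pos (div_pos hε hnorm), div_mul_cancel₀ _ hnorm.ne']
  have := hball hmem y hy
  rw [inner_add_left, real_inner_smul_left, real_inner_self_eq_norm_sq] at this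
  have hsq : ε / ‖y‖ * ‖y‖ ^ 2 = ε * ‖y‖ := by field_simp
  linarith

theorem radial_le {K : Set (E n)} {v : E n} {r : ℝ} (hr : 0 < r) (hrv : r • v ∈ K) :
    radial K v ≤ r :=
  csInf_le ⟨0, fun _ hs => hs.1.le⟩ ⟨hr, hrv⟩

theorem radial_pos_and_smul_mem {K : Set (E n)} (hKcl : IsClosed K) (h0 : (0 : E n) ∉ K)
    {v : E n} (hv : ∃ r > (0 : ℝ), r • v ∈ K) : 0 < radial K v ∧ radial K v • v ∈ K := by
  set P := (fun r : ℝ => r • v) ⁻¹' K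
  have hPcl : IsClosed P := hKcl.preimage (by fun_prop)
  obtain ⟨η, hη, hηP⟩ := exists_pos_le_norm_of_isClosed hPcl (by simpa [P] using h0)
  have hA : {r : ℝ | 0 < r ∧ r • v ∈ K} = P ∩ Ici η := by
    ext r
    constructor
    · rintro ⟨hr, hrK⟩
      exact ⟨hrK, by simpa [abs_of_pos hr] using hηP r hrK⟩
    · rintro ⟨hrK, hηr⟩
      exact ⟨hη.trans_le hηr, hrK⟩
  have hmem : radial K v ∈ P ∩ Ici η := by
    rw [radial, hA]
    obtain ⟨r, hr, hrK⟩ := hv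
    refine (hPcl.inter isClosed_Ici).csInf_mem ⟨r, ?_⟩ ⟨η, fun _ h => h.2⟩
    rw [← hA]
    exact ⟨hr, hrK⟩
  exact ⟨hη.trans_le hmem.2, hmem.1⟩

theorem radial_copolar_eq_sSup {K : Set (E n)} (hKne : K.Nonempty) {u : E n}
    (hu : ∀ y ∈ K, inner ℝ u y < 0) :
    radial (copolar K) u = sSup ((fun y => 1 / |(inner ℝ u y : ℝ)|) '' K) := by
  have hiff : ∀ y ∈ K, ∀ r : ℝ, 1 / |(inner ℝ u y : ℝ)| ≤ r ↔ r * inner ℝ u y ≤ -1 := by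
    intro y hy r
    rw [abs_of_neg (hu y hy), div_le_iff₀ (neg_pos.2 (hu y hy))]
    constructor <;> intro h <;> linarith
  have hset : {r : ℝ | 0 < r ∧ r • u ∈ copolar K} =
      upperBounds ((fun y => 1 / |(inner ℝ u y : ℝ)|) '' K) := by
    ext r
    simp only [copolar, mem_ofPred_eq, real_inner_smul_left, mem_upperBounds, forall_mem_image]
    constructor
    · exact fun h y hy => (hiff y hy r).2 (h.2 y hy)
    · intro h
      obtain ⟨y, hy⟩ := hKne
      refine ⟨(one_div_pos.2 (abs_pos.2 (hu y hy).ne)).trans_le (h hy),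
        fun y hy => (hiff y hy r).1 (h hy)⟩
  rw [radial, hset]
  by_cases hbdd : BddAbove ((fun y => 1 / |(inner ℝ u y : ℝ)|) '' K)
  · exact csInf_upperBounds_eq_csSup hbdd (hKne.image _)
  · rw [Real.sSup_of_not_bddAbove hbdd, not_nonempty_iff_eq_empty.1 hbdd, Real.sInf_empty]

theorem one_div_abs_inner_smul (u v : E n) {r : ℝ} (hr : 0 < r) :
    1 / |(inner ℝ u (r • v) : ℝ)| = 1 / (|(inner ℝ u v : ℝ)| * r) := by
  rw [real_inner_smul_right, abs_mul, abs_of_pos hr, mul_comm]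

section PseudoCone

variable (C : ConvexCone ℝ (E n)) {K : Set (E n)} (hKne : K.Nonempty) (hKcl : IsClosed K)
  (h0 : (0 : E n) ∉ K) (hKC : K + (C : Set (E n)) = K)
include hKne hKcl h0 hKC

theorem radial_pos_and_smul_mem_of_mem_Omega {v : E n} (hv : v ∈ Omega (C : Set (E n))) :
    0 < radial K v ∧ radial K v • v ∈ K :=
  radial_pos_and_smul_mem hKcl h0 (C.exists_pos_smul_mem_of_add_eq hKne hKC hv.2)

theorem exists_mem_Omega_one_div_abs_inner_le {u : E n} (hu : ∀ y ∈ K, inner ℝ u y < 0) {y : E n}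
    (hyK : y ∈ K) (hyC : y ∈ interior (C : Set (E n))) :
    ∃ v ∈ Omega (C : Set (E n)),
      1 / |(inner ℝ u y : ℝ)| ≤ 1 / (|(inner ℝ u v : ℝ)| * radial K v) := by
  have hy : 0 < ‖y‖ := norm_pos_iff.2 fun h => h0 (h ▸ hyK)
  set v := ‖y‖⁻¹ • y
  have hyv : ‖y‖ • v = y := by simp [v, smul_smul, mul_inv_cancel₀ hy.ne']
  have hv : v ∈ Omega (C : Set (E n)) :=
    ⟨by simp [v, norm_smul, inv_mul_cancel₀ hy.ne'], C.smul_mem_interior (inv_pos.2 hy) hyC⟩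
  obtain ⟨hρ, hρK⟩ := radial_pos_and_smul_mem_of_mem_Omega C hKne hKcl h0 hKC hv
  have huv : 0 < |(inner ℝ u v : ℝ)| :=
    abs_pos.2 fun h => (hu _ hρK).ne (by simp [h, inner_smul_right])
  refine ⟨v, hv, ?_⟩
  rw [← hyv, one_div_abs_inner_smul u v hy]
  gcongr
  exact radial_le hy (by rwa [hyv])

theorem pconj_radial_eq_sSup (hCint : (interior (C : Set (E n))).Nonempty)
    (hKsub : K ⊆ C) {u : E n} (hu : ∀ y ∈ K, inner ℝ u y < 0)
    (hbdd : BddAbove ((fun y => 1 / |(inner ℝ u y : ℝ)|) '' K)) :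
    pconj (Omega C) (radial K) u = sSup ((fun y => 1 / |(inner ℝ u y : ℝ)|) '' K) := by
  set φ : E n → ℝ := fun y => 1 / |(inner ℝ u y : ℝ)|
  have hsub : (fun v => 1 / (|(inner ℝ u v : ℝ)| * radial K v)) '' Omega C ⊆ φ '' K := by
    rintro _ ⟨v, hv, rfl⟩
    obtain ⟨hρ, hρK⟩ := radial_pos_and_smul_mem_of_mem_Omega C hKne hKcl h0 hKC hv
    exact ⟨_, hρK, one_div_abs_inner_smul u v hρ⟩
  have hle_interior : φ '' (K ∩ interior (C : Set (E n))) ⊆ Iic (pconj (Omega C) (radial K) u) := by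
    rintro _ ⟨y, ⟨hyK, hyC⟩, rfl⟩
    obtain ⟨v, hv, hle⟩ := exists_mem_Omega_one_div_abs_inner_le C hKne hKcl h0 hKC hu hyK hyC
    exact hle.trans (le_csSup (hbdd.mono hsub) ⟨v, hv, rfl⟩)
  have hφ_cont : ContinuousOn φ (closure (K ∩ interior (C : Set (E n)))) := by
    refine ContinuousOn.div continuousOn_const (by fun_prop) fun y hy => ?_
    exact abs_ne_zero.2 (hu y (closure_minimal inter_subset_left hKcl hy)).ne
  have hle : φ '' K ⊆ Iic (pconj (Omega C) (radial K) u) :=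
    (image_mono (C.subset_closure_inter_interior hCint hKsub hKC)).trans <|
      hφ_cont.image_closure.trans <| closure_minimal hle_interior isClosed_Iic
  have hφ_nonneg : ∀ x ∈ φ '' K, 0 ≤ x := by
    rintro _ ⟨y, -, rfl⟩
    positivity
  exact le_antisymm
    (Real.sSup_le (fun x hx => le_csSup hbdd (hsub hx)) (Real.sSup_nonneg hφ_nonneg))
    (Real.sSup_le hle (Real.sSup_nonneg fun x hx => hφ_nonneg x (hsub hx)))

end PseudoCone

end

theorem stmt13 {n : ℕ} (C K : Set (E n)) (hC : IsGoodCone C) (hK : IsPseudoCone C K) :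
    ∀ u ∈ Omega (dualCone C), pconj (Omega C) (radial K) u = radial (copolar K) u := by
  obtain ⟨hKne, hKcl, -, hKsub, h0, hKC⟩ := hK
  rintro u ⟨-, hu⟩
  obtain ⟨ε, hε, hεC⟩ := exists_inner_le_neg_mul_norm hu
  obtain ⟨d, hd, hdK⟩ := exists_pos_le_norm_of_isClosed hKcl h0
  have huK : ∀ y ∈ K, inner ℝ u y ≤ -(ε * d) := fun y hy =>
    (hεC y (hKsub hy)).trans (neg_le_neg (mul_le_mul_of_nonneg_left (hdK y hy) hε.le))
  have hneg : ∀ y ∈ K, inner ℝ u y < 0 := fun y hy => (huK y hy).trans_lt (neg_lt_zero.2 (mul_pos hε hd))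
  have hbdd : BddAbove ((fun y => 1 / |(inner ℝ u y : ℝ)|) '' K) := by
    refine ⟨1 / (ε * d), forall_mem_image.2 fun y hy => ?_⟩
    gcongr
    exact (le_neg.1 (huK y hy)).trans (neg_le_abs _)
  rw [radial_copolar_eq_sSup hKne hneg]
  exact pconj_radial_eq_sSup hC.toConvexCone hKne hKcl h0 hKC hC.2.2.2.2 hKsub hneg hbdd
end
end
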